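/- arXiv:2501.02733 — 3 statements merged into one kernel-verified Lean document; each statement's English description precedes it below -/
import Mathlib

section
/- For any signed measure decomposition, the Coulomb energy splits as H_N^V(X_N) = E(μ∞, V) + F(X_N, μ∞) + Σ_{i=1}^N ζ(x_i), where F is the jellium energy with background μ∞, E(μ,V) is the electrostatic self-energy, and ζ is the effective confining potential. -/
/-! Integrating `ζ = g * μ + V - c` against `μ`, where it vanishes almost everywhere, gives
`∫ g * μ dμ + ∫ V dμ = c N`; evaluating it at the points gives
`∑ ζ(x_i) = ∑ (g * μ)(x_i) + ∑ V(x_i) - c N`. Adding the two, the constant `c N` cancels and the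
remaining terms regroup into `E + F`. -/

open MeasureTheory Finset
open scoped ENNReal

lemma integral_add_eq_measureReal_mul_of_ae_eq_zero {α : Type*} [MeasurableSpace α]
    {μ : Measure α} {h V ζ : α → ℝ} {c : ℝ} (hζ : ∀ x, ζ x = h x + V x - c)
    (hζ_ae : ∀ᵐ x ∂μ, ζ x = 0) (hh : Integrable h μ) (hV : Integrable V μ) :
    ∫ x, h x ∂μ + ∫ x, V x ∂μ = μ.real Set.univ * c := by
  have hconst : ∀ᵐ x ∂μ, h x + V x = c := hζ_ae.mono fun x hx => by linarith [hζ x]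
  rw [← integral_add hh hV, integral_congr_ae hconst, integral_const, smul_eq_mul]

theorem splitting_formula_general {d N : ℕ}
    (g : EuclideanSpace ℝ (Fin d) → ℝ)
    (V : EuclideanSpace ℝ (Fin d) → ℝ)
    (μ : Measure (EuclideanSpace ℝ (Fin d)))
    (c : ℝ)
    (ζ : EuclideanSpace ℝ (Fin d) → ℝ)
    (hζdef : ∀ x, ζ x = (∫ y, g (x - y) ∂μ) + V x - c)
    (hμmass : μ Set.univ = (N : ℝ≥0∞))
    (hζsupp : ∀ᵐ x ∂μ, ζ x = 0)
    (hVint : Integrable V μ)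
    (hhint : Integrable (fun x => ∫ y, g (x - y) ∂μ) μ)
    (X : Fin N → EuclideanSpace ℝ (Fin d)) :
    -- H_N^V(X_N)
    (1 / 2) * (∑ i, ∑ j, if i = j then 0 else g (X i - X j)) + ∑ i, V (X i)
      -- E(μ∞, V)
      = ((1 / 2) * (∫ x, (∫ y, g (x - y) ∂μ) ∂μ) + ∫ x, V x ∂μ)
        -- F(X_N, μ∞)
        + ((1 / 2) * (∑ i, ∑ j, if i = j then 0 else g (X i - X j))
            - (∑ i, ∫ y, g (X i - y) ∂μ)
            + (1 / 2) * (∫ x, (∫ y, g (x - y) ∂μ) ∂μ))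
        -- ∑ ζ(x_i)
        + ∑ i, ζ (X i) := by
  have hmass : μ.real Set.univ = N := by simp [measureReal_def, hμmass]
  have hintegral := integral_add_eq_measureReal_mul_of_ae_eq_zero hζdef hζsupp hhint hVint
  have hpoints : ∑ i, ζ (X i) = ∑ i, ∫ y, g (X i - y) ∂μ + ∑ i, V (X i) - N * c := by
    simp only [hζdef, sum_sub_distrib, sum_add_distrib, sum_const, card_univ, Fintype.card_fin,
      nsmul_eq_mul]
  rw [hmass] at hintegral
  linarith

/-- Electric splitting formula: `H_N^V(X_N) = E(μ∞,V) + F(X_N,μ∞) + ∑ ζ(x_i)`,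
where `F` is the jellium energy with background `μ∞` (written in expanded form,
valid since `μ∞` has a Lebesgue density so the diagonal is null),
`E(μ,V)` is the electrostatic self-energy, and `ζ` is the effective confining
potential. -/
theorem splitting_formula {d N : ℕ} (hd : 2 ≤ d) (hN : 1 ≤ N)
    (g : EuclideanSpace ℝ (Fin d) → ℝ)
    (hg : ∀ x, g x = if d = 2 then -Real.log ‖x‖ else ‖x‖ ^ (-((d : ℝ) - 2)))
    (V : EuclideanSpace ℝ (Fin d) → ℝ)
    (μ : Measure (EuclideanSpace ℝ (Fin d)))
    (c : ℝ)
    (ζ : EuclideanSpace ℝ (Fin d) → ℝ)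
    (hζdef : ∀ x, ζ x = (∫ y, g (x - y) ∂μ) + V x - c)
    (hμmass : μ Set.univ = (N : ℝ≥0∞))
    (hζnonneg : ∀ x, 0 ≤ ζ x)
    (hζsupp : ∀ᵐ x ∂μ, ζ x = 0)
    (hVint : Integrable V μ)
    (hhint : Integrable (fun x => ∫ y, g (x - y) ∂μ) μ)
    (X : Fin N → EuclideanSpace ℝ (Fin d))
    (hXint : ∀ i, Integrable (fun y => g (X i - y)) μ) :
    -- H_N^V(X_N)
    (1 / 2) * (∑ i, ∑ j, if i = j then 0 else g (X i - X j)) + ∑ i, V (X i)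
      -- E(μ∞, V)
      = ((1 / 2) * (∫ x, (∫ y, g (x - y) ∂μ) ∂μ) + ∫ x, V x ∂μ)
        -- F(X_N, μ∞)
        + ((1 / 2) * (∑ i, ∑ j, if i = j then 0 else g (X i - X j))
            - (∑ i, ∫ y, g (X i - y) ∂μ)
            + (1 / 2) * (∫ x, (∫ y, g (x - y) ∂μ) ∂μ))
        -- ∑ ζ(x_i)
        + ∑ i, ζ (X i) :=
  splitting_formula_general g V μ c ζ hζdef hμmass hζsupp hVint hhint X
end

section
/- Jensen transport inequality: for fixed X_{N,1} = (x_2,...,x_N) and any y ∈ R^d, e^{-β F((y, X_{N,1}), μ_θ)} ≤ e^{(β/N) Fluct'[h^{μ_θ}] - β g*fluct'(y)} · (1/N) ∫ e^{-β F((z, X_{N,1}), μ_θ)} μ_θ(dz), where fluct' = Σ_{i=2}^N δ_{x_i} - μ_θ and Fluct'[φ] = ∫φ dfluct'. -/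
open MeasureTheory Real Finset
open scoped ENNReal

/-- The Coulomb potential `h^μ(z) = ∫ g(z - w) μ(dw)` generated by a measure `μ`. -/
noncomputable def coulombPot {d : ℕ} (g : EuclideanSpace ℝ (Fin d) → ℝ)
    (μ : Measure (EuclideanSpace ℝ (Fin d))) (z : EuclideanSpace ℝ (Fin d)) : ℝ :=
  ∫ w, g (z - w) ∂μ

/-- The (expanded) jellium energy `F(X, μ)` of points `X` on background `μ`. -/
noncomputable def jellium {d n : ℕ} (g : EuclideanSpace ℝ (Fin d) → ℝ)
    (μ : Measure (EuclideanSpace ℝ (Fin d))) (X : Fin n → EuclideanSpace ℝ (Fin d)) : ℝ :=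
  (1 / 2) * (∑ i, ∑ j, if i = j then 0 else g (X i - X j))
    - (∑ i, coulombPot g μ (X i)) + (1 / 2) * ∫ z, coulombPot g μ z ∂μ

/-!
Up to the constant `F(X_{N,1}, μ_θ)`, the energy `F((z, X_{N,1}), μ_θ)` is the potential
`(g * fluct')(z)` of the remaining configuration, whose `μ_θ`-average is `(1/N) Fluct'[h^{μ_θ}]`
by the symmetry of `g`. For any `F`, writing `F y = ⨍ F - (⨍ F - F y)` and applying Jensen's
inequality to the convex `exp` gives `e^{-β F y} ≤ e^{β ⨍ F - β F y} ⨍ e^{-β F}`.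
-/

/-- The potential `(g * fluct')(z)` of `fluct' = ∑ᵢ δ_{xᵢ} - μ`. -/
noncomputable def fluctPot {d m : ℕ} (g : EuclideanSpace ℝ (Fin d) → ℝ)
    (μ : Measure (EuclideanSpace ℝ (Fin d))) (x : Fin m → EuclideanSpace ℝ (Fin d))
    (z : EuclideanSpace ℝ (Fin d)) : ℝ :=
  (∑ i, g (z - x i)) - coulombPot g μ z

theorem exp_neg_mul_le_exp_mul_average {α : Type*} [MeasurableSpace α] {μ : Measure α}
    [IsFiniteMeasure μ] [NeZero μ] (β : ℝ) {F : α → ℝ} (hF : Integrable F μ)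
    (hexp : Integrable (fun z => exp (-β * F z)) μ) (y : α) :
    exp (-β * F y) ≤ exp (β * ⨍ z, F z ∂μ - β * F y) * ⨍ z, exp (-β * F z) ∂μ := by
  have jensen : exp (⨍ z, -β * F z ∂μ) ≤ ⨍ z, exp (-β * F z) ∂μ :=
    convexOn_exp.map_average_le continuous_exp.continuousOn isClosed_univ
      (.of_forall fun _ => Set.mem_univ _) (hF.const_mul (-β)) hexp
  calc exp (-β * F y)
      = exp (β * ⨍ z, F z ∂μ - β * F y) * exp (⨍ z, -β * F z ∂μ) := by
        rw [← exp_add, average_eq, average_eq, integral_const_mul, smul_eq_mul, smul_eq_mul]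
        ring_nf
    _ ≤ _ := by gcongr

section Jellium

variable {d m : ℕ} {g : EuclideanSpace ℝ (Fin d) → ℝ} (hgsymm : ∀ z, g (-z) = g z)
  (μ : Measure (EuclideanSpace ℝ (Fin d))) (x : Fin m → EuclideanSpace ℝ (Fin d))
include hgsymm

theorem jellium_cons (z : EuclideanSpace ℝ (Fin d)) :
    jellium g μ (Fin.cons z x) = jellium g μ x + fluctPot g μ x z := by
  have hswap (i : Fin m) : g (x i - z) = g (z - x i) := by rw [← hgsymm, neg_sub]
  simp only [jellium, fluctPot, Fin.sum_univ_succ, Fin.cons_zero, Fin.cons_succ, Fin.succ_inj,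
    Fin.succ_ne_zero, (Fin.succ_ne_zero _).symm, if_true, if_false, hswap, sum_add_distrib]
  ring

theorem integral_comp_sub_eq_coulombPot (a : EuclideanSpace ℝ (Fin d)) :
    ∫ z, g (z - a) ∂μ = coulombPot g μ a :=
  integral_congr_ae (.of_forall fun z => by simp only [← hgsymm (z - a), neg_sub])

theorem integral_fluctPot (hint : ∀ i, Integrable (fun z => g (z - x i)) μ)
    (hpot : Integrable (coulombPot g μ) μ) :
    ∫ z, fluctPot g μ x z ∂μ = (∑ i, coulombPot g μ (x i)) - ∫ z, coulombPot g μ z ∂μ := by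
  unfold fluctPot
  rw [integral_sub (integrable_finsetSum _ fun i _ => hint i) hpot,
    integral_finsetSum _ fun i _ => hint i]
  simp only [integral_comp_sub_eq_coulombPot hgsymm]

end Jellium

theorem jensen_transport_inequality_general {d m : ℕ}
    (β : ℝ)
    (g : EuclideanSpace ℝ (Fin d) → ℝ) (hgsymm : ∀ z, g (-z) = g z)
    (μθ : Measure (EuclideanSpace ℝ (Fin d))) [IsFiniteMeasure μθ]
    (hmass : (μθ Set.univ).toReal = (m : ℝ) + 1)
    (x : Fin m → EuclideanSpace ℝ (Fin d)) (y : EuclideanSpace ℝ (Fin d))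
    (hint1 : ∀ i, Integrable (fun z => g (z - x i)) μθ)
    (hint2 : Integrable (coulombPot g μθ) μθ)
    (hexpint : Integrable (fun z => Real.exp (-β * jellium g μθ (Fin.cons z x))) μθ) :
    Real.exp (-β * jellium g μθ (Fin.cons y x))
      ≤ Real.exp ((β / ((m : ℝ) + 1)) *
            ((∑ i, coulombPot g μθ (x i)) - ∫ z, coulombPot g μθ z ∂μθ)
          - β * ((∑ i, g (y - x i)) - coulombPot g μθ y))
        * ((1 / ((m : ℝ) + 1)) *
            ∫ z, Real.exp (-β * jellium g μθ (Fin.cons z x)) ∂μθ) := by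
  have hmass' : μθ.real Set.univ = m + 1 := hmass
  have : NeZero μθ := ⟨fun h => by simp [h] at hmass'; linarith⟩
  have hφ : Integrable (fluctPot g μθ x) μθ :=
    (integrable_finsetSum _ fun i _ => hint1 i).sub hint2
  have hF : Integrable (fun z => jellium g μθ (Fin.cons z x)) μθ := by
    simp only [jellium_cons hgsymm]
    exact (integrable_const _).add hφ
  have havg : ⨍ z, jellium g μθ (Fin.cons z x) ∂μθ = jellium g μθ x
      + ((∑ i, coulombPot g μθ (x i)) - ∫ z, coulombPot g μθ z ∂μθ) / (m + 1) := by
    simp only [jellium_cons hgsymm, average_eq, integral_add (integrable_const _) hφ,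
      integral_fluctPot hgsymm μθ x hint1 hint2, integral_const, hmass', smul_eq_mul]
    field_simp
  calc _ ≤ _ := exp_neg_mul_le_exp_mul_average β hF hexpint y
    _ = _ := by
      rw [havg, jellium_cons hgsymm, fluctPot, average_eq, hmass', smul_eq_mul]
      ring_nf

/-- Jensen transport inequality: with `fluct' = ∑_{i=2}^N δ_{x_i} - μ_θ`,
`Fluct'[φ] = ∫ φ dfluct'`, and `N = m + 1`,
`e^{-β F((y,X_{N,1}),μ_θ)} ≤ e^{(β/N) Fluct'[h^{μ_θ}] - β (g*fluct')(y)}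
  · (1/N) ∫ e^{-β F((z,X_{N,1}),μ_θ)} μ_θ(dz)`. -/
theorem jensen_transport_inequality {d m : ℕ} (hd : 2 ≤ d) (hm : 1 ≤ m)
    (β : ℝ) (hβ : 0 < β)
    (g : EuclideanSpace ℝ (Fin d) → ℝ) (hgsymm : ∀ z, g (-z) = g z)
    (μθ : Measure (EuclideanSpace ℝ (Fin d))) [IsFiniteMeasure μθ]
    (hmass : (μθ Set.univ).toReal = (m : ℝ) + 1)
    (x : Fin m → EuclideanSpace ℝ (Fin d)) (y : EuclideanSpace ℝ (Fin d))
    (hint1 : ∀ i, Integrable (fun z => g (z - x i)) μθ)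
    (hint2 : Integrable (coulombPot g μθ) μθ)
    (hexpint : Integrable (fun z => Real.exp (-β * jellium g μθ (Fin.cons z x))) μθ) :
    Real.exp (-β * jellium g μθ (Fin.cons y x))
      ≤ Real.exp ((β / ((m : ℝ) + 1)) *
            ((∑ i, coulombPot g μθ (x i)) - ∫ z, coulombPot g μθ z ∂μθ)
          - β * ((∑ i, g (y - x i)) - coulombPot g μθ y))
        * ((1 / ((m : ℝ) + 1)) *
            ∫ z, Real.exp (-β * jellium g μθ (Fin.cons z x)) ∂μθ) :=
  jensen_transport_inequality_general β g hgsymm μθ hmass x y hint1 hint2 hexpint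
end

section
/- Let μ∞ be a measure of mass N with density bounded by a constant C₀, let F(X_N, μ∞) be the jellium energy, and assume ζ ≥ 0 with ζ = 0 q.e. on supp μ∞. Then K_β = ∫ e^{-βF(X_N,μ∞) - βΣζ(x_i)} dX_N satisfies K_β ≥ e^{-CN} e^{N log N} exp((β/2N)∬ g(x-y) μ∞(dx)μ∞(dy)), and log K_β ≥ N log N - CN. -/
open MeasureTheory Real Finset
open scoped ENNReal

section Aux
variable {α : Type*} [MeasurableSpace α]

lemma pi_le_smul_pi (μ ν : Measure α) [IsFiniteMeasure μ] [SigmaFinite ν]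
    (c : ℝ≥0∞) (h : ∀ s, μ s ≤ c * ν s) (n : ℕ) :
    Measure.pi (fun _ : Fin n => μ) ≤ (c ^ n) • Measure.pi (fun _ : Fin n => ν) := by
  induction n with
  | zero =>
      rw [pow_zero, one_smul]
      exact le_of_eq (by rw [Measure.pi_of_empty, Measure.pi_of_empty])
  | succ n ih =>
      have hμle : μ ≤ c • ν := Measure.le_iff.2 fun s _ => by simpa using h s
      set e := MeasurableEquiv.piFinSuccAbove (fun _ : Fin (n + 1) => α) 0 with he
      have hmpμ : MeasurePreserving e (Measure.pi fun _ : Fin (n + 1) => μ)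
          (μ.prod (Measure.pi fun _ : Fin n => μ)) :=
        measurePreserving_piFinSuccAbove (fun _ : Fin (n + 1) => μ) 0
      have hmpν : MeasurePreserving e (Measure.pi fun _ : Fin (n + 1) => ν)
          (ν.prod (Measure.pi fun _ : Fin n => ν)) :=
        measurePreserving_piFinSuccAbove (fun _ : Fin (n + 1) => ν) 0
      refine Measure.le_iff.2 fun s hs => ?_
      have hA : MeasurableSet (e.symm ⁻¹' s) := e.symm.measurable hs
      have h1 : (Measure.pi fun _ : Fin (n + 1) => μ) s
          = (μ.prod (Measure.pi fun _ : Fin n => μ)) (e.symm ⁻¹' s) :=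
        ((hmpμ.symm e).measure_preimage hs.nullMeasurableSet).symm
      have h2 : (Measure.pi fun _ : Fin (n + 1) => ν) s
          = (ν.prod (Measure.pi fun _ : Fin n => ν)) (e.symm ⁻¹' s) :=
        ((hmpν.symm e).measure_preimage hs.nullMeasurableSet).symm
      rw [Measure.smul_apply, smul_eq_mul, h1, h2]
      rw [Measure.prod_apply hA, Measure.prod_apply hA]
      calc
        ∫⁻ x, (Measure.pi fun _ : Fin n => μ) (Prod.mk x ⁻¹' (e.symm ⁻¹' s)) ∂μ
            ≤ ∫⁻ x, c ^ n * (Measure.pi fun _ : Fin n => ν) (Prod.mk x ⁻¹' (e.symm ⁻¹' s)) ∂μ := by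
              refine lintegral_mono fun x => ?_
              simpa using Measure.le_iff'.1 ih (Prod.mk x ⁻¹' (e.symm ⁻¹' s))
        _ ≤ ∫⁻ x, c ^ n * (Measure.pi fun _ : Fin n => ν) (Prod.mk x ⁻¹' (e.symm ⁻¹' s)) ∂(c • ν) :=
              lintegral_mono' hμle le_rfl
        _ = c ^ (n + 1) * ∫⁻ x, (Measure.pi fun _ : Fin n => ν) (Prod.mk x ⁻¹' (e.symm ⁻¹' s)) ∂ν := by
              rw [lintegral_smul_measure, lintegral_const_mul _
                (measurable_measure_prodMk_left hA), smul_eq_mul]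
              ring

lemma map_eval_pi (μ : Measure α) [IsFiniteMeasure μ] {n : ℕ} (i : Fin n) :
    Measure.map (fun X : Fin n → α => X i) (Measure.pi fun _ => μ)
      = (μ Set.univ) ^ (n - 1) • μ := by
  ext s hs
  rw [Measure.map_apply (measurable_pi_apply i) hs, Measure.smul_apply, smul_eq_mul]
  have hpre : (fun X : Fin n → α => X i) ⁻¹' s
      = Set.pi Set.univ (Function.update (fun _ => Set.univ) i s) := by
    ext X
    simp only [Set.mem_preimage, Set.mem_pi, Set.mem_univ, forall_true_left]
    constructor
    · intro hX j
      rcases eq_or_ne j i with rfl | hji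
      · simpa using hX
      · simp [Function.update_of_ne hji]
    · intro hX
      have := hX i
      simpa using this
  rw [hpre, Measure.pi_pi]
  have hterm : ∀ k : Fin n, μ (Function.update (fun _ => Set.univ) i s k)
      = Function.update (fun _ => μ Set.univ) i (μ s) k := by
    intro k
    rcases eq_or_ne k i with rfl | hki
    · simp
    · rw [Function.update_of_ne hki, Function.update_of_ne hki]
  rw [Finset.prod_congr rfl fun k _ => hterm k,
    Finset.prod_update_of_mem (Finset.mem_univ i), ← Finset.erase_eq, Finset.prod_const,
    Finset.card_erase_of_mem (Finset.mem_univ i), Finset.card_univ, Fintype.card_fin,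
    mul_comm]

lemma map_eval_pair_pi (μ : Measure α) [IsFiniteMeasure μ] {n : ℕ} {i j : Fin n}
    (hij : i ≠ j) :
    Measure.map (fun X : Fin n → α => (X i, X j)) (Measure.pi fun _ => μ)
      = μ.prod ((μ Set.univ) ^ (n - 2) • μ) := by
  haveI : IsFiniteMeasure ((μ Set.univ) ^ (n - 2) • μ) := by
    refine ⟨?_⟩
    rw [Measure.smul_apply, smul_eq_mul]
    exact ENNReal.mul_lt_top (ENNReal.pow_lt_top (measure_lt_top μ _)) (measure_lt_top μ _)
  refine (Measure.prod_eq fun s t hs ht => ?_).symm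
  rw [Measure.map_apply ((measurable_pi_apply i).prodMk (measurable_pi_apply j))
    (hs.prod ht)]
  have hpre : (fun X : Fin n → α => (X i, X j)) ⁻¹' (s ×ˢ t)
      = Set.pi Set.univ
          (Function.update (Function.update (fun _ => Set.univ) i s) j t) := by
    ext X
    simp only [Set.mem_preimage, Set.mem_prod, Set.mem_pi, Set.mem_univ, forall_true_left]
    constructor
    · rintro ⟨hXi, hXj⟩ k
      rcases eq_or_ne k j with rfl | hkj
      · simpa using hXj
      · rw [Function.update_of_ne hkj]
        rcases eq_or_ne k i with rfl | hki
        · simpa using hXi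
        · simp [Function.update_of_ne hki]
    · intro hX
      have h1 := hX i
      have h2 := hX j
      rw [Function.update_of_ne hij] at h1
      simp only [Function.update_self] at h1 h2
      exact ⟨h1, h2⟩
  rw [hpre, Measure.pi_pi]
  have hterm : ∀ k : Fin n,
      μ (Function.update (Function.update (fun _ => Set.univ) i s) j t k)
      = Function.update (Function.update (fun _ => μ Set.univ) i (μ s)) j (μ t) k := by
    intro k
    rcases eq_or_ne k j with rfl | hkj
    · simp
    · rw [Function.update_of_ne hkj, Function.update_of_ne hkj]
      rcases eq_or_ne k i with rfl | hki
      · simp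
      · rw [Function.update_of_ne hki, Function.update_of_ne hki]
  rw [Finset.prod_congr rfl fun k _ => hterm k,
    Finset.prod_update_of_mem (Finset.mem_univ j), ← Finset.erase_eq,
    Finset.prod_update_of_mem (Finset.mem_erase.2 ⟨hij, Finset.mem_univ i⟩), ← Finset.erase_eq,
    Finset.prod_const, Finset.card_erase_of_mem (Finset.mem_erase.2 ⟨hij, Finset.mem_univ i⟩),
    Finset.card_erase_of_mem (Finset.mem_univ j), Finset.card_univ, Fintype.card_fin,
    Nat.sub_sub, Measure.smul_apply, smul_eq_mul]
  ring

lemma lintegral_eval_pi (μ : Measure α) [IsFiniteMeasure μ] {n : ℕ} (i : Fin n)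
    {f : α → ℝ≥0∞} (hf : Measurable f) :
    ∫⁻ X : Fin n → α, f (X i) ∂(Measure.pi fun _ => μ)
      = (μ Set.univ) ^ (n - 1) * ∫⁻ x, f x ∂μ := by
  rw [← lintegral_map hf (measurable_pi_apply i), map_eval_pi, lintegral_smul_measure, smul_eq_mul]

lemma lintegral_pair_pi (μ : Measure α) [IsFiniteMeasure μ] {n : ℕ} {i j : Fin n}
    (hij : i ≠ j) {φ : α × α → ℝ≥0∞} (hφ : Measurable φ) :
    ∫⁻ X : Fin n → α, φ (X i, X j) ∂(Measure.pi fun _ => μ)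
      = (μ Set.univ) ^ (n - 2) * ∫⁻ x, ∫⁻ y, φ (x, y) ∂μ ∂μ := by
  haveI : IsFiniteMeasure ((μ Set.univ) ^ (n - 2) • μ) := by
    refine ⟨?_⟩
    rw [Measure.smul_apply, smul_eq_mul]
    exact ENNReal.mul_lt_top (ENNReal.pow_lt_top (measure_lt_top μ _)) (measure_lt_top μ _)
  rw [← lintegral_map hφ ((measurable_pi_apply i).prodMk (measurable_pi_apply j)),
    map_eval_pair_pi μ hij, lintegral_prod _ hφ.aemeasurable]
  simp_rw [lintegral_smul_measure, smul_eq_mul]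
  rw [lintegral_const_mul _ hφ.lintegral_prod_right']

end Aux

lemma pow_cast_eq_mul (n : ℕ) (hn : 1 ≤ n) : (n:ℝ) ^ n = n * (n:ℝ) ^ (n - 1) := by
  obtain ⟨k, rfl⟩ : ∃ k, n = k + 1 := ⟨n - 1, by omega⟩
  rw [Nat.add_sub_cancel, pow_succ]
  ring

lemma jell_numeric (n : ℕ) (hn : 1 ≤ n) (x : ℝ) :
    1 / 2 * ((n:ℝ) * (((n:ℝ) - 1) * ((n:ℝ) ^ (n - 2) * x))) - (n:ℝ) * ((n:ℝ) ^ (n - 1) * x)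
      + (n:ℝ) ^ n * (1 / 2 * x) = -(1 / 2) * (n:ℝ) ^ (n - 1) * x := by
  rcases Nat.lt_or_ge n 2 with h | h
  · have hn1 : n = 1 := by omega
    subst hn1
    norm_num
    ring
  · obtain ⟨k, rfl⟩ : ∃ k, n = k + 2 := ⟨n - 2, by omega⟩
    rw [show k + 2 - 1 = k + 1 from rfl, show k + 2 - 2 = k from rfl]
    push_cast
    ring


/-- Lower bound for the partition function (`d ≥ 3`, so `g ≥ 0`): if `μ∞` has total mass `N`,
Lebesgue density at most `C₀ ≥ 1`, and `ζ ≥ 0` vanishes `μ∞`-a.e., then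
`K_β = ∫ e^{-βF(X_N,μ∞) - β∑ζ(x_i)} dX_N` satisfies
`K_β ≥ e^{-(log C₀)N} e^{N log N} exp((β/(2N)) ∬ g(x-y) μ∞(dx)μ∞(dy))`,
in particular `log K_β ≥ N log N - CN` with `C = log C₀`. -/
theorem partition_function_lower_bound {d N : ℕ} (hd : 3 ≤ d) (hN : 1 ≤ N)
    (g : EuclideanSpace ℝ (Fin d) → ℝ) (hg0 : ∀ z, 0 ≤ g z)
    (hgsymm : ∀ z, g (-z) = g z) (hgmeas : Measurable g)
    (μ : Measure (EuclideanSpace ℝ (Fin d))) [IsFiniteMeasure μ]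
    (hmass : (μ Set.univ).toReal = (N : ℝ))
    (C₀ : ℝ) (hC₀ : 1 ≤ C₀)
    (hden : ∀ s : Set (EuclideanSpace ℝ (Fin d)), μ s ≤ ENNReal.ofReal C₀ * volume s)
    (ζ : EuclideanSpace ℝ (Fin d) → ℝ) (hζnonneg : ∀ x, 0 ≤ ζ x)
    (hζmeas : Measurable ζ) (hζ0 : ∀ᵐ x ∂μ, ζ x = 0)
    (β : ℝ) (hβ : 0 < β)
    (hpt : ∀ z, Integrable (fun w => g (z - w)) μ)
    (hpotint : Integrable (coulombPot g μ) μ)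
    (hFint : Integrable (jellium g μ) (Measure.pi fun _ : Fin N => μ)) :
    ENNReal.ofReal (Real.exp (-(Real.log C₀) * N) * Real.exp ((N : ℝ) * Real.log N) *
        Real.exp ((β / (2 * N)) * ∫ z, coulombPot g μ z ∂μ))
      ≤ ∫⁻ X : Fin N → EuclideanSpace ℝ (Fin d),
          ENNReal.ofReal (Real.exp (-β * jellium g μ X - β * ∑ i, ζ (X i)))
          ∂(Measure.pi fun _ : Fin N => volume) := by
  classical
  have hC₀pos : (0:ℝ) < C₀ := lt_of_lt_of_le one_pos hC₀
  have hNpos : (0:ℝ) < N := by exact_mod_cast hN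
  have hNne : (N:ℝ) ≠ 0 := ne_of_gt hNpos
  set Λ : Measure (Fin N → EuclideanSpace ℝ (Fin d)) := Measure.pi fun _ => μ with hΛ
  set I : ℝ := ∫ z, coulombPot g μ z ∂μ with hIdef
  set m : ℝ := β / (2 * N) * I with hm
  have hh0 : ∀ z, 0 ≤ coulombPot g μ z := fun z => integral_nonneg fun w => hg0 _
  have hI0 : 0 ≤ I := by rw [hIdef]; exact integral_nonneg hh0
  have hhm : Measurable (coulombPot g μ) := by
    have hsm : StronglyMeasurable fun p :
        (EuclideanSpace ℝ (Fin d)) × (EuclideanSpace ℝ (Fin d)) => g (p.1 - p.2) :=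
      (hgmeas.comp (measurable_fst.sub measurable_snd)).stronglyMeasurable
    exact hsm.integral_prod_right'.measurable
  have hmtop : μ Set.univ ≠ ⊤ := measure_ne_top μ _
  haveI : IsFiniteMeasure Λ := by rw [hΛ]; infer_instance
  have hΛuniv : Λ Set.univ = (μ Set.univ) ^ N := by
    rw [hΛ, Measure.pi_univ, Finset.prod_const, Finset.card_univ, Fintype.card_fin]
  have hΛunivR : (Λ Set.univ).toReal = (N : ℝ) ^ N := by
    rw [hΛuniv, ENNReal.toReal_pow, hmass]
  -- single-coordinate integrals
  have hTi : ∀ i : Fin N, Integrable (fun X : Fin N → EuclideanSpace ℝ (Fin d) =>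
      coulombPot g μ (X i)) Λ := by
    intro i
    have h1 : Integrable (coulombPot g μ) ((μ Set.univ) ^ (N - 1) • μ) :=
      hpotint.smul_measure (ENNReal.pow_ne_top hmtop)
    rw [← map_eval_pi μ i] at h1
    have h2 := (integrable_map_measure hhm.aestronglyMeasurable
      (measurable_pi_apply i).aemeasurable).1 h1
    rw [hΛ]
    exact h2
  have hTival : ∀ i : Fin N, ∫ X, coulombPot g μ (X i) ∂Λ = (N:ℝ) ^ (N - 1) * I := by
    intro i
    have hasm : AEStronglyMeasurable (coulombPot g μ)
        (Measure.map (fun X : Fin N → EuclideanSpace ℝ (Fin d) => X i) Λ) :=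
      hhm.aestronglyMeasurable
    have e1 : ∫ X, coulombPot g μ (X i) ∂Λ = ∫ y, coulombPot g μ y
        ∂(Measure.map (fun X : Fin N → EuclideanSpace ℝ (Fin d) => X i) Λ) :=
      (integral_map (measurable_pi_apply i).aemeasurable hasm).symm
    rw [hΛ, map_eval_pi μ i, integral_smul_measure, smul_eq_mul, ENNReal.toReal_pow, hmass,
      ← hIdef] at e1
    exact e1
  have hTint : Integrable (fun X : Fin N → EuclideanSpace ℝ (Fin d) =>
      ∑ i, coulombPot g μ (X i)) Λ := integrable_finset_sum _ fun i _ => hTi i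
  have hTval : ∫ X, (∑ i, coulombPot g μ (X i)) ∂Λ = (N:ℝ) * ((N:ℝ) ^ (N - 1) * I) := by
    rw [integral_finset_sum _ fun i _ => hTi i, Finset.sum_congr rfl fun i _ => hTival i,
      Finset.sum_const, Finset.card_univ, Fintype.card_fin, nsmul_eq_mul]
  -- the pair interaction
  have hS0 : ∀ X : Fin N → EuclideanSpace ℝ (Fin d),
      0 ≤ ∑ i, ∑ j, if i = j then 0 else g (X i - X j) := by
    intro X
    refine Finset.sum_nonneg fun i _ => Finset.sum_nonneg fun j _ => ?_
    split_ifs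
    · exact le_refl 0
    · exact hg0 _
  have hSint : Integrable (fun X : Fin N → EuclideanSpace ℝ (Fin d) =>
      ∑ i, ∑ j, if i = j then 0 else g (X i - X j)) Λ := by
    have heq : (fun X : Fin N → EuclideanSpace ℝ (Fin d) =>
        ∑ i, ∑ j, if i = j then 0 else g (X i - X j))
        = fun X => 2 * jellium g μ X + 2 * (∑ i, coulombPot g μ (X i)) - I := by
      funext X
      simp only [jellium]
      rw [← hIdef]
      ring
    rw [heq]
    exact ((hFint.const_mul 2).add (hTint.const_mul 2)).sub (integrable_const _)
  have hmeas_term : ∀ i j : Fin N, Measurable fun X : Fin N → EuclideanSpace ℝ (Fin d) =>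
      ENNReal.ofReal (if i = j then 0 else g (X i - X j)) := by
    intro i j
    split_ifs
    · exact measurable_const
    · exact (hgmeas.comp ((measurable_pi_apply i).sub (measurable_pi_apply j))).ennreal_ofReal
  have hpair : ∀ i j : Fin N, i ≠ j →
      ∫⁻ X, ENNReal.ofReal (g (X i - X j)) ∂Λ
        = (μ Set.univ) ^ (N - 2) * ENNReal.ofReal I := by
    intro i j hij
    have hφ : Measurable fun p : EuclideanSpace ℝ (Fin d) × EuclideanSpace ℝ (Fin d) =>
        ENNReal.ofReal (g (p.1 - p.2)) :=
      (hgmeas.comp (measurable_fst.sub measurable_snd)).ennreal_ofReal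
    have h2 : ∫⁻ X, ENNReal.ofReal (g (X i - X j)) ∂Λ
        = (μ Set.univ) ^ (N - 2) * ∫⁻ x, ∫⁻ y, ENNReal.ofReal (g (x - y)) ∂μ ∂μ := by
      rw [hΛ]
      exact lintegral_pair_pi μ hij hφ
    rw [h2]
    congr 1
    have hx : ∀ x, ∫⁻ y, ENNReal.ofReal (g (x - y)) ∂μ = ENNReal.ofReal (coulombPot g μ x) :=
      fun x => (ofReal_integral_eq_lintegral_ofReal (hpt x)
        (Filter.Eventually.of_forall fun w => hg0 _)).symm
    simp_rw [hx]
    rw [hIdef]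
    exact (ofReal_integral_eq_lintegral_ofReal hpotint
      (Filter.Eventually.of_forall fun z => hh0 z)).symm
  have hSlint : ∫⁻ X, ENNReal.ofReal (∑ i, ∑ j, if i = j then 0 else g (X i - X j)) ∂Λ
      = (N:ℝ≥0∞) * ((N - 1 : ℕ) * ((μ Set.univ) ^ (N - 2) * ENNReal.ofReal I)) := by
    have hof : ∀ X : Fin N → EuclideanSpace ℝ (Fin d),
        ENNReal.ofReal (∑ i, ∑ j, if i = j then 0 else g (X i - X j))
        = ∑ i, ∑ j, ENNReal.ofReal (if i = j then 0 else g (X i - X j)) := by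
      intro X
      rw [ENNReal.ofReal_sum_of_nonneg fun i _ => Finset.sum_nonneg fun j _ => by
        split_ifs
        · exact le_refl 0
        · exact hg0 _]
      refine Finset.sum_congr rfl fun i _ => ?_
      rw [ENNReal.ofReal_sum_of_nonneg fun j _ => by
        split_ifs
        · exact le_refl 0
        · exact hg0 _]
    simp_rw [hof]
    rw [lintegral_finset_sum _ fun i _ => Finset.measurable_sum _ fun j _ => hmeas_term i j]
    have hinner : ∀ i : Fin N,
        ∫⁻ X, (∑ j, ENNReal.ofReal (if i = j then 0 else g (X i - X j))) ∂Λ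
        = (N - 1 : ℕ) * ((μ Set.univ) ^ (N - 2) * ENNReal.ofReal I) := by
      intro i
      rw [lintegral_finset_sum _ fun j _ => hmeas_term i j]
      have hterm : ∀ j : Fin N,
          ∫⁻ X, ENNReal.ofReal (if i = j then 0 else g (X i - X j)) ∂Λ
          = if i = j then 0 else (μ Set.univ) ^ (N - 2) * ENNReal.ofReal I := by
        intro j
        rcases eq_or_ne i j with rfl | hij
        · simp
        · rw [if_neg hij]
          have : (fun X : Fin N → EuclideanSpace ℝ (Fin d) =>
              ENNReal.ofReal (if i = j then 0 else g (X i - X j)))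
              = fun X => ENNReal.ofReal (g (X i - X j)) := by
            funext X; rw [if_neg hij]
          rw [this]
          exact hpair i j hij
      rw [Finset.sum_congr rfl fun j _ => hterm j,
        ← Finset.add_sum_erase _ _ (Finset.mem_univ i), if_pos rfl, zero_add,
        Finset.sum_congr rfl fun j hj =>
          if_neg (fun h => (Finset.mem_erase.1 hj).1 h.symm),
        Finset.sum_const, Finset.card_erase_of_mem (Finset.mem_univ i), Finset.card_univ,
        Fintype.card_fin, nsmul_eq_mul]
    rw [Finset.sum_congr rfl fun i _ => hinner i, Finset.sum_const, Finset.card_univ,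
      Fintype.card_fin, nsmul_eq_mul]
  have hSval : ∫ X, (∑ i, ∑ j, if i = j then 0 else g (X i - X j)) ∂Λ
      = (N:ℝ) * (((N:ℝ) - 1) * ((N:ℝ) ^ (N - 2) * I)) := by
    rw [integral_eq_lintegral_of_nonneg_ae (Filter.Eventually.of_forall hS0)
      hSint.aestronglyMeasurable, hSlint]
    rw [ENNReal.toReal_mul, ENNReal.toReal_mul, ENNReal.toReal_mul, ENNReal.toReal_pow, hmass,
      ENNReal.toReal_ofReal hI0]
    simp only [ENNReal.toReal_natCast, Nat.cast_sub hN, Nat.cast_one]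
  -- the value of the mean energy
  have hJ : ∫ X, jellium g μ X ∂Λ = -(1 / 2) * (N:ℝ) ^ (N - 1) * I := by
    have hrepr : (jellium g μ : (Fin N → EuclideanSpace ℝ (Fin d)) → ℝ)
        = fun X => (1 / 2 * (∑ i, ∑ j, if i = j then 0 else g (X i - X j))
            - ∑ i, coulombPot g μ (X i)) + 1 / 2 * I := by
      funext X
      simp only [jellium]
      rw [← hIdef]
    have h1 : Integrable (fun X : Fin N → EuclideanSpace ℝ (Fin d) =>
        1 / 2 * (∑ i, ∑ j, if i = j then 0 else g (X i - X j))
          - ∑ i, coulombPot g μ (X i)) Λ := (hSint.const_mul _).sub hTint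
    rw [hrepr, integral_add h1 (integrable_const _),
      integral_sub (hSint.const_mul _) hTint, integral_const_mul, hSval, hTval, integral_const,
      smul_eq_mul, measureReal_def, hΛunivR]
    exact jell_numeric N hN I
  have hkey : -β * ∫ X, jellium g μ X ∂Λ = m * (N:ℝ) ^ N := by
    rw [hJ, hm, pow_cast_eq_mul N hN]
    field_simp
  -- Jensen step
  have hGint : Integrable (fun X : Fin N → EuclideanSpace ℝ (Fin d) =>
      Real.exp m * (1 + (-β * jellium g μ X - m))) Λ :=
    ((integrable_const 1).add ((hFint.const_mul (-β)).sub (integrable_const m))).const_mul _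
  have hGval : ∫ X, Real.exp m * (1 + (-β * jellium g μ X - m)) ∂Λ
      = Real.exp m * (N:ℝ) ^ N := by
    have h2 : Integrable (fun X : Fin N → EuclideanSpace ℝ (Fin d) =>
        -β * jellium g μ X - m) Λ := (hFint.const_mul (-β)).sub (integrable_const m)
    rw [integral_const_mul, integral_add (integrable_const 1) h2,
      integral_sub (hFint.const_mul (-β)) (integrable_const m), integral_const_mul,
      integral_const, integral_const, smul_eq_mul, smul_eq_mul, measureReal_def, hΛunivR, hkey]
    ring
  have hpoint : ∀ X : Fin N → EuclideanSpace ℝ (Fin d),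
      Real.exp m * (1 + (-β * jellium g μ X - m)) ≤ Real.exp (-β * jellium g μ X) := by
    intro X
    have h1 : 1 + (-β * jellium g μ X - m) ≤ Real.exp (-β * jellium g μ X - m) := by
      have := Real.add_one_le_exp (-β * jellium g μ X - m)
      linarith
    calc Real.exp m * (1 + (-β * jellium g μ X - m))
        ≤ Real.exp m * Real.exp (-β * jellium g μ X - m) :=
          mul_le_mul_of_nonneg_left h1 (Real.exp_nonneg m)
      _ = Real.exp (-β * jellium g μ X) := by
          rw [← Real.exp_add]
          ring_nf
  have hclaim2 : ENNReal.ofReal (Real.exp m * (N:ℝ) ^ N)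
      ≤ ∫⁻ X, ENNReal.ofReal (Real.exp (-β * jellium g μ X)) ∂Λ := by
    have hpos : Integrable (fun X : Fin N → EuclideanSpace ℝ (Fin d) =>
        max (Real.exp m * (1 + (-β * jellium g μ X - m))) 0) Λ := hGint.pos_part
    calc ENNReal.ofReal (Real.exp m * (N:ℝ) ^ N)
        = ENNReal.ofReal (∫ X, Real.exp m * (1 + (-β * jellium g μ X - m)) ∂Λ) := by
          rw [hGval]
      _ ≤ ENNReal.ofReal (∫ X, max (Real.exp m * (1 + (-β * jellium g μ X - m))) 0 ∂Λ) :=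
          ENNReal.ofReal_le_ofReal (integral_mono hGint hpos fun X => le_max_left _ _)
      _ = ∫⁻ X, ENNReal.ofReal (max (Real.exp m * (1 + (-β * jellium g μ X - m))) 0) ∂Λ :=
          ofReal_integral_eq_lintegral_ofReal hpos
            (Filter.Eventually.of_forall fun X => le_max_right _ _)
      _ = ∫⁻ X, ENNReal.ofReal (Real.exp m * (1 + (-β * jellium g μ X - m))) ∂Λ := by
          refine lintegral_congr fun X => ?_
          rcases le_total (Real.exp m * (1 + (-β * jellium g μ X - m))) 0 with h | h
          · rw [max_eq_right h, ENNReal.ofReal_zero, ENNReal.ofReal_of_nonpos h]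
          · rw [max_eq_left h]
      _ ≤ ∫⁻ X, ENNReal.ofReal (Real.exp (-β * jellium g μ X)) ∂Λ :=
          lintegral_mono fun X => ENNReal.ofReal_le_ofReal (hpoint X)
  -- getting rid of ζ
  have hzeta : ∀ᵐ X ∂Λ, ∑ i, ζ (X i) = 0 := by
    have h0 : ∀ i : Fin N, ∀ᵐ X ∂Λ, ζ (X i) = 0 := by
      intro i
      have hnull : μ {x | ¬ ζ x = 0} = 0 := ae_iff.1 hζ0
      rw [ae_iff, hΛ]
      exact Measure.pi_eval_preimage_null (μ := fun _ : Fin N => μ) hnull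
    filter_upwards [ae_all_iff.2 h0] with X hX
    exact Finset.sum_eq_zero fun i _ => hX i
  have hclaim1 : ∫⁻ X, ENNReal.ofReal (Real.exp (-β * jellium g μ X - β * ∑ i, ζ (X i))) ∂Λ
      = ∫⁻ X, ENNReal.ofReal (Real.exp (-β * jellium g μ X)) ∂Λ :=
    lintegral_congr_ae (hzeta.mono fun X hX => by simp only [hX, mul_zero, sub_zero])
  -- comparison of the two product measures
  have hle := pi_le_smul_pi μ volume (ENNReal.ofReal C₀) hden N
  have hcE0 : (ENNReal.ofReal C₀) ≠ 0 := ne_of_gt (ENNReal.ofReal_pos.2 hC₀pos)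
  have hmain : ∫⁻ X, ENNReal.ofReal (Real.exp (-β * jellium g μ X - β * ∑ i, ζ (X i))) ∂Λ
      ≤ (ENNReal.ofReal C₀) ^ N *
        ∫⁻ X : Fin N → EuclideanSpace ℝ (Fin d),
          ENNReal.ofReal (Real.exp (-β * jellium g μ X - β * ∑ i, ζ (X i)))
          ∂(Measure.pi fun _ : Fin N => volume) := by
    rw [hΛ]
    calc ∫⁻ X, ENNReal.ofReal (Real.exp (-β * jellium g μ X - β * ∑ i, ζ (X i)))
          ∂(Measure.pi fun _ : Fin N => μ)
        ≤ ∫⁻ X, ENNReal.ofReal (Real.exp (-β * jellium g μ X - β * ∑ i, ζ (X i)))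
          ∂((ENNReal.ofReal C₀) ^ N • Measure.pi fun _ : Fin N => volume) :=
          lintegral_mono' hle le_rfl
      _ = _ := lintegral_smul_measure _ _
  -- rewriting the left-hand side
  have hLHS : ENNReal.ofReal (Real.exp (-(Real.log C₀) * N) * Real.exp ((N:ℝ) * Real.log N) *
        Real.exp m)
      = ((ENNReal.ofReal C₀) ^ N)⁻¹ * ENNReal.ofReal (Real.exp m * (N:ℝ) ^ N) := by
    have h1 : Real.exp (-(Real.log C₀) * N) = (C₀ ^ N)⁻¹ := by
      rw [show -(Real.log C₀) * N = -((N:ℝ) * Real.log C₀) by ring, Real.exp_neg,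
        Real.exp_nat_mul, Real.exp_log hC₀pos]
    have h2 : Real.exp ((N:ℝ) * Real.log N) = (N:ℝ) ^ N := by
      rw [Real.exp_nat_mul, Real.exp_log hNpos]
    rw [h1, h2, show (C₀ ^ N)⁻¹ * (N:ℝ) ^ N * Real.exp m
        = (C₀ ^ N)⁻¹ * (Real.exp m * (N:ℝ) ^ N) by ring,
      ENNReal.ofReal_mul (inv_nonneg.2 (pow_nonneg (le_of_lt hC₀pos) N)),
      ENNReal.ofReal_inv_of_pos (pow_pos hC₀pos N), ENNReal.ofReal_pow (le_of_lt hC₀pos)]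
  rw [hLHS]
  calc ((ENNReal.ofReal C₀) ^ N)⁻¹ * ENNReal.ofReal (Real.exp m * (N:ℝ) ^ N)
      ≤ ((ENNReal.ofReal C₀) ^ N)⁻¹ * ((ENNReal.ofReal C₀) ^ N *
        ∫⁻ X : Fin N → EuclideanSpace ℝ (Fin d),
          ENNReal.ofReal (Real.exp (-β * jellium g μ X - β * ∑ i, ζ (X i)))
          ∂(Measure.pi fun _ : Fin N => volume)) := by
        refine mul_le_mul_right ?_ _
        calc ENNReal.ofReal (Real.exp m * (N:ℝ) ^ N)
            ≤ ∫⁻ X, ENNReal.ofReal (Real.exp (-β * jellium g μ X)) ∂Λ := hclaim2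
          _ = ∫⁻ X, ENNReal.ofReal (Real.exp (-β * jellium g μ X - β * ∑ i, ζ (X i))) ∂Λ :=
              hclaim1.symm
          _ ≤ _ := hmain
    _ = ∫⁻ X : Fin N → EuclideanSpace ℝ (Fin d),
          ENNReal.ofReal (Real.exp (-β * jellium g μ X - β * ∑ i, ζ (X i)))
          ∂(Measure.pi fun _ : Fin N => volume) := by
        rw [← mul_assoc, ENNReal.inv_mul_cancel (pow_ne_zero N hcE0)
          (ENNReal.pow_ne_top ENNReal.ofReal_ne_top), one_mul]
end
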